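/- Let A = A0 + A1ε ∈ DQ^{p×q} and B = B0 + B1ε ∈ DQ^{p×r} be dual quaternion matrices. Set A2 = A1·L_{A0}, B2 = B1 − A1·A0†·B0, C11 = R_{A0}·B2, and A3 = R_{A0}·A2. Then the dual quaternion matrix equation AX = B has a solution X ∈ DQ^{q×r} if and only if R_{A0}·B0 = 0 and R_{A3}·C11 = 0. -/

import Mathlib

open Matrix

/-- Quaternion matrices of size `p × q`. -/
abbrev QM (p q : ℕ) := Matrix (Fin p) (Fin q) (Quaternion ℝ)

/-- `Ad` is a Moore–Penrose inverse of the quaternion matrix `A`. -/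
def IsMP {p q : ℕ} (A : QM p q) (Ad : QM q p) : Prop :=
  A * Ad * A = A ∧ Ad * A * Ad = Ad ∧ (A * Ad)ᴴ = A * Ad ∧ (Ad * A)ᴴ = Ad * A

/-- The dual quaternion matrix `A0 + A1 ε`, realized as a matrix over the
dual numbers (dual quaternions) `DualNumber (Quaternion ℝ)`. -/
noncomputable def dm {p q : ℕ} (A0 A1 : QM p q) :
    Matrix (Fin p) (Fin q) (DualNumber (Quaternion ℝ)) :=
  A0.map TrivSqZeroExt.inl + A1.map TrivSqZeroExt.inr

/-- The rank of a quaternion matrix: the dimension (over `ℍ`) of the left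
`ℍ`-submodule spanned by its rows. -/
noncomputable def qrank {m n : Type*} (A : Matrix m n (Quaternion ℝ)) : ℕ :=
  Module.finrank (Quaternion ℝ)
    (Submodule.span (Quaternion ℝ) (Set.range (fun i : m => fun j : n => A i j)))

/-!
Writing `X = X0 + X1 ε`, the equation `A X = B` splits into the quaternion system
`A0 X0 = B0`, `A0 X1 = B1 - A1 X0`. For any inner inverse `G` of `A0` (`A0 G A0 = A0`),
`A0 Z = W` is solvable iff `(1 - A0 G) W = 0`, and then its solutions are
`G W + (1 - G A0) Y`. Substituting the general solution `X0 = G B0 + (1 - G A0) Y` of the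
first equation into the solvability condition of the second turns it into `A3 Y = C11`,
which is solvable iff `(1 - A3 A3†) C11 = 0`.
-/

namespace Matrix

section InnerInverse

variable {R : Type*} [Ring R] {m n l : Type*} [Fintype m] [Fintype n]
  {A : Matrix m n R} {G : Matrix n m R}

theorem one_sub_mul_mul_self_eq_zero [DecidableEq m] (hG : A * G * A = A) :
    (1 - A * G) * A = 0 := by
  rw [Matrix.sub_mul, Matrix.one_mul, hG, sub_self]

theorem mul_one_sub_mul_eq_zero [DecidableEq n] (hG : A * G * A = A) :
    A * (1 - G * A) = 0 := by
  rw [Matrix.mul_sub, Matrix.mul_one, ← Matrix.mul_assoc, hG, sub_self]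

theorem exists_mul_eq_iff [DecidableEq m] (hG : A * G * A = A) (B : Matrix m l R) :
    (∃ X : Matrix n l R, A * X = B) ↔ (1 - A * G) * B = 0 := by
  constructor
  · rintro ⟨X, rfl⟩
    rw [← Matrix.mul_assoc, one_sub_mul_mul_self_eq_zero hG, Matrix.zero_mul]
  · intro hB
    refine ⟨G * B, ?_⟩
    rwa [Matrix.sub_mul, Matrix.one_mul, sub_eq_zero, eq_comm, Matrix.mul_assoc] at hB

theorem mul_eq_iff_exists_eq_add [DecidableEq m] [DecidableEq n] (hG : A * G * A = A)
    {B : Matrix m l R} (hB : (1 - A * G) * B = 0) (X : Matrix n l R) :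
    A * X = B ↔ ∃ Y : Matrix n l R, X = G * B + (1 - G * A) * Y := by
  constructor
  · rintro rfl
    refine ⟨X, ?_⟩
    rw [Matrix.sub_mul, Matrix.one_mul, Matrix.mul_assoc, add_sub_cancel]
  · rintro ⟨Y, rfl⟩
    rw [Matrix.mul_add, ← Matrix.mul_assoc A, ← Matrix.mul_assoc A,
      mul_one_sub_mul_eq_zero hG, Matrix.zero_mul, add_zero]
    rwa [Matrix.sub_mul, Matrix.one_mul, sub_eq_zero, eq_comm] at hB

end InnerInverse

variable {R : Type*} [Ring R] {m n l : Type*} [Fintype m] [Fintype n] [DecidableEq m]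
  [DecidableEq n]

theorem exists_mul_eq_and_mul_add_mul_eq_iff {A0 A1 : Matrix m n R} {G0 : Matrix n m R}
    {A3 : Matrix m n R} {G3 : Matrix n m R} (hG0 : A0 * G0 * A0 = A0)
    (hG3 : A3 * G3 * A3 = A3) (hA3 : A3 = (1 - A0 * G0) * (A1 * (1 - G0 * A0)))
    (B0 B1 : Matrix m l R) :
    (∃ (X0 X1 : Matrix n l R), A0 * X0 = B0 ∧ A0 * X1 + A1 * X0 = B1) ↔
      (1 - A0 * G0) * B0 = 0 ∧ (1 - A3 * G3) * ((1 - A0 * G0) * (B1 - A1 * G0 * B0)) = 0 := by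
  have second_solvable (X0 : Matrix n l R) :
      (∃ X1 : Matrix n l R, A0 * X1 + A1 * X0 = B1) ↔ (1 - A0 * G0) * (B1 - A1 * X0) = 0 := by
    simp only [← eq_sub_iff_add_eq, exists_mul_eq_iff hG0]
  have reduced (Y : Matrix n l R) :
      (1 - A0 * G0) * (B1 - A1 * (G0 * B0 + (1 - G0 * A0) * Y)) =
        (1 - A0 * G0) * (B1 - A1 * G0 * B0) - A3 * Y := by
    rw [hA3, Matrix.mul_add A1, ← Matrix.mul_assoc A1 G0, sub_add_eq_sub_sub, Matrix.mul_sub]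
    simp only [Matrix.mul_assoc]
  simp only [exists_and_left, second_solvable]
  by_cases hB0 : (1 - A0 * G0) * B0 = 0
  · simp only [mul_eq_iff_exists_eq_add hG0 hB0, hB0, true_and, ← exists_mul_eq_iff hG3]
    simp [reduced, sub_eq_zero, eq_comm]
  · refine iff_of_false ?_ (fun h => hB0 h.1)
    rintro ⟨X0, rfl, -⟩
    exact hB0 (by rw [← Matrix.mul_assoc, one_sub_mul_mul_self_eq_zero hG0, Matrix.zero_mul])

end Matrix

section DualMatrix

variable {p q r : ℕ}

theorem dm_mul (A0 A1 : QM p q) (X0 X1 : QM q r) :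
    dm A0 A1 * dm X0 X1 = dm (A0 * X0) (A0 * X1 + A1 * X0) :=
  Matrix.ext fun i j => TrivSqZeroExt.ext
    (by simp [dm, Matrix.mul_apply, TrivSqZeroExt.fst_sum, TrivSqZeroExt.fst_mul])
    (by simp [dm, Matrix.mul_apply, TrivSqZeroExt.snd_sum, TrivSqZeroExt.snd_mul,
      MulOpposite.smul_eq_mul_unop, smul_eq_mul, Finset.sum_add_distrib, add_comm])

theorem dm_surjective (X : Matrix (Fin p) (Fin q) (DualNumber (Quaternion ℝ))) :
    ∃ X0 X1 : QM p q, dm X0 X1 = X :=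
  ⟨X.map TrivSqZeroExt.fst, X.map TrivSqZeroExt.snd, Matrix.ext fun i j => by
    simp only [dm, Matrix.add_apply, Matrix.map_apply]
    exact TrivSqZeroExt.inl_fst_add_inr_snd_eq _⟩

theorem dm_inj {A0 A1 B0 B1 : QM p q} : dm A0 A1 = dm B0 B1 ↔ A0 = B0 ∧ A1 = B1 := by
  refine ⟨fun h => ⟨Matrix.ext fun i j => ?_, Matrix.ext fun i j => ?_⟩,
    fun ⟨h0, h1⟩ => h0 ▸ h1 ▸ rfl⟩
  · simpa [dm] using congrArg (fun M => (M i j).fst) h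
  · simpa [dm] using congrArg (fun M => (M i j).snd) h

theorem exists_dm_mul_eq_iff (A0 A1 : QM p q) (B0 B1 : QM p r) :
    (∃ X : Matrix (Fin q) (Fin r) (DualNumber (Quaternion ℝ)), dm A0 A1 * X = dm B0 B1) ↔
      ∃ X0 X1 : QM q r, A0 * X0 = B0 ∧ A0 * X1 + A1 * X0 = B1 := by
  constructor
  · rintro ⟨X, hX⟩
    obtain ⟨X0, X1, rfl⟩ := dm_surjective X
    exact ⟨X0, X1, dm_inj.mp (by rw [← dm_mul, hX])⟩
  · rintro ⟨X0, X1, h⟩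
    exact ⟨dm X0 X1, by rw [dm_mul, dm_inj.mpr h]⟩

end DualMatrix

/-- solvability of the dual quaternion matrix equation `A X = B`. -/
theorem stmt7 {p q r : ℕ}
    (A0 A1 : QM p q) (B0 B1 : QM p r)
    (A0d : QM q p) (hA0d : IsMP A0 A0d)
    (A2 : QM p q) (hA2 : A2 = A1 * (1 - A0d * A0))
    (B2 : QM p r) (hB2 : B2 = B1 - A1 * A0d * B0)
    (C11 : QM p r) (hC11 : C11 = (1 - A0 * A0d) * B2)
    (A3 : QM p q) (hA3 : A3 = (1 - A0 * A0d) * A2)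
    (A3d : QM q p) (hA3d : IsMP A3 A3d) :
    (∃ X : Matrix (Fin q) (Fin r) (DualNumber (Quaternion ℝ)),
        dm A0 A1 * X = dm B0 B1) ↔
      ((1 - A0 * A0d) * B0 = 0 ∧ (1 - A3 * A3d) * C11 = 0) := by
  subst hA2 hB2 hC11
  rw [exists_dm_mul_eq_iff]
  exact exists_mul_eq_and_mul_add_mul_eq_iff hA0d.1 hA3d.1 hA3 B0 B1
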